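/- arXiv:2604.11938 — 2 statements merged into one kernel-verified Lean document; each statement's English description precedes it below -/
import Mathlib

section
/- Let k, d ≥ 1 be integers and let ξ_1, …, ξ_d be independent random variables taking values in {1,…,k}. Let p := max over 1 ≤ j ≤ d and a ∈ {1,…,k} of P[ξ_j = a], and assume p < 1. Let A := {1,…,k} \ {ξ_1, …, ξ_d} be the set of values not attained. Then E[|A|] ≥ k · ((1−p)/e)^{d/k}. -/
open MeasureTheory ProbabilityTheory Finset

theorem aux_sum_prod {k d : ℕ} (hk : 1 ≤ k) (hd : 1 ≤ d) (P : Fin d → Fin k → ℝ) (p : ℝ)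
    (hnn : ∀ j a, 0 ≤ P j a) (hle : ∀ j a, P j a ≤ p) (hsum : ∀ j, ∑ a, P j a = 1)
    (hp1 : p < 1) :
    (k : ℝ) * ((1 - p) / Real.exp 1) ^ ((d : ℝ) / k) ≤ ∑ a, ∏ j, (1 - P j a) := by
  have hkpos : (0:ℝ) < k := by positivity
  have hj0 : Fin d := ⟨0, hd⟩
  have hppos : 0 < p := by
    by_contra h
    push_neg at h
    have : ∑ a, P hj0 a ≤ 0 := Finset.sum_nonpos fun a _ => (hle hj0 a).trans h
    rw [hsum hj0] at this; linarith
  have h1p : 0 < 1 - p := by linarith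
  set c : ℝ := Real.log (1 - p) / p with hc
  -- step 1
  have step1 : ∀ j a, Real.exp (c * P j a) ≤ 1 - P j a := by
    intro j a
    have ht0 : 0 ≤ P j a / p := div_nonneg (hnn j a) hppos.le
    have ht1 : P j a / p ≤ 1 := (div_le_one hppos).2 (hle j a)
    have key := Real.geom_mean_le_arith_mean2_weighted ht0 (by linarith : 0 ≤ 1 - P j a / p)
      h1p.le zero_le_one (by ring)
    rw [Real.one_rpow, mul_one, mul_one] at key
    have heq : Real.exp (c * P j a) = (1 - p) ^ (P j a / p) := by
      rw [Real.rpow_def_of_pos h1p]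
      rw [hc]; ring
    have hP : P j a / p * p = P j a := div_mul_cancel₀ _ hppos.ne'
    rw [heq]
    calc (1 - p) ^ (P j a / p) ≤ P j a / p * (1 - p) + (1 - P j a / p) := key
      _ = 1 - P j a := by rw [mul_one_sub, hP]; ring
  -- step 2
  have step2 : ∀ a, Real.exp (c * ∑ j, P j a) ≤ ∏ j, (1 - P j a) := by
    intro a
    rw [Finset.mul_sum, Real.exp_sum]
    exact Finset.prod_le_prod (fun j _ => (Real.exp_pos _).le) (fun j _ => step1 j a)
  -- step 3 : AM-GM
  have step3 : (k:ℝ) * Real.exp (c * ((d:ℝ)/k)) ≤ ∑ a, Real.exp (c * ∑ j, P j a) := by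
    have key := Real.geom_mean_le_arith_mean_weighted Finset.univ
      (fun _ : Fin k => (1:ℝ)/k) (fun a => Real.exp (c * ∑ j, P j a))
      (fun i _ => by positivity)
      (by rw [Finset.sum_const, Finset.card_univ, Fintype.card_fin, nsmul_eq_mul]; exact mul_one_div_cancel hkpos.ne')
      (fun i _ => (Real.exp_pos _).le)
    have hL : ∏ a : Fin k, Real.exp (c * ∑ j, P j a) ^ ((1:ℝ)/k)
        = Real.exp (c * ((d:ℝ)/k)) := by
      have : ∀ a : Fin k, Real.exp (c * ∑ j, P j a) ^ ((1:ℝ)/k)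
          = Real.exp (c * (∑ j, P j a) * (1/k)) := by
        intro a
        rw [← Real.exp_mul (c * ∑ j, P j a) (1/(k:ℝ))]
      rw [Finset.prod_congr rfl fun a _ => this a, ← Real.exp_sum]
      congr 1
      have hsc : ∑ a : Fin k, ∑ j, P j a = (d:ℝ) := by
        rw [Finset.sum_comm]
        simp [hsum]
      rw [← Finset.sum_mul, ← Finset.mul_sum, hsc]
      ring
    rw [hL] at key
    calc (k:ℝ) * Real.exp (c * ((d:ℝ)/k))
        ≤ (k:ℝ) * ∑ a : Fin k, (1/(k:ℝ)) * Real.exp (c * ∑ j, P j a) := by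
          exact mul_le_mul_of_nonneg_left key hkpos.le
      _ = ∑ a, Real.exp (c * ∑ j, P j a) := by
          rw [← Finset.mul_sum]; field_simp
  -- step 4
  have step4 : ((1 - p) / Real.exp 1) ^ ((d : ℝ) / k) ≤ Real.exp (c * ((d:ℝ)/k)) := by
    have hbase : 0 < (1 - p) / Real.exp 1 := by positivity
    rw [Real.rpow_def_of_pos hbase]
    apply Real.exp_le_exp.2
    have hlog : Real.log ((1 - p) / Real.exp 1) = Real.log (1 - p) - 1 := by
      rw [Real.log_div h1p.ne' (Real.exp_pos 1).ne', Real.log_exp]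
    rw [hlog]
    have hdk : 0 ≤ (d:ℝ)/k := by positivity
    have hkey : Real.log (1 - p) - 1 ≤ c := by
      have hx : 1 + p / (1 - p) ≤ Real.exp (p / (1 - p)) := by
        linarith [Real.add_one_le_exp (p/(1-p))]
      have h2 : (1:ℝ)/(1-p) ≤ Real.exp (p/(1-p)) := by
        have : 1 + p/(1-p) = 1/(1-p) := by field_simp; ring
        linarith [hx, this.symm.le]
      have h3 : -(p/(1-p)) ≤ Real.log (1 - p) := by
        rw [← Real.log_exp (-(p/(1-p)))]
        apply Real.log_le_log (Real.exp_pos _)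
        rw [Real.exp_neg]
        rw [inv_le_comm₀ (Real.exp_pos _) h1p]
        calc (1-p)⁻¹ = 1/(1-p) := (one_div _).symm
          _ ≤ Real.exp (p/(1-p)) := h2
      -- want: L - 1 ≤ L / p, i.e. L(1-p) ≥ -p
      rw [hc, le_div_iff₀ hppos]
      have h4 : -(p/(1-p)) * (1 - p) ≤ Real.log (1-p) * (1-p) :=
        mul_le_mul_of_nonneg_right h3 h1p.le
      have h5 : -(p/(1-p)) * (1 - p) = -p := by field_simp
      nlinarith [h4, h5]
    exact mul_le_mul_of_nonneg_right hkey hdk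
  calc (k : ℝ) * ((1 - p) / Real.exp 1) ^ ((d : ℝ) / k)
      ≤ (k:ℝ) * Real.exp (c * ((d:ℝ)/k)) := mul_le_mul_of_nonneg_left step4 hkpos.le
    _ ≤ ∑ a, Real.exp (c * ∑ j, P j a) := step3
    _ ≤ ∑ a, ∏ j, (1 - P j a) := Finset.sum_le_sum fun a _ => step2 a

theorem stmt_3 {Ω : Type*} [MeasurableSpace Ω] (μ : Measure Ω) [IsProbabilityMeasure μ]
    (k d : ℕ) (hk : 1 ≤ k) (hd : 1 ≤ d)
    (ξ : Fin d → Ω → Fin k) (hmeas : ∀ j, Measurable (ξ j))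
    (hindep : iIndepFun ξ μ)
    (p : ℝ)
    (hp : p = ⨆ j : Fin d, ⨆ a : Fin k, (μ {ω | ξ j ω = a}).toReal)
    (hp1 : p < 1) :
    (k : ℝ) * ((1 - p) / Real.exp 1) ^ ((d : ℝ) / k) ≤
      ∫ ω, (Set.ncard {a : Fin k | ∀ j, ξ j ω ≠ a} : ℝ) ∂μ := by
  classical
  set P : Fin d → Fin k → ℝ := fun j a => (μ {ω | ξ j ω = a}).toReal with hP
  have hpre : ∀ j a, {ω | ξ j ω = a} = ξ j ⁻¹' {a} := by
    intro j a; ext ω; simp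
  have hnn : ∀ j a, 0 ≤ P j a := fun j a => ENNReal.toReal_nonneg
  have hle : ∀ j a, P j a ≤ p := by
    intro j a
    rw [hp]
    calc P j a ≤ ⨆ a, P j a := le_ciSup (Set.Finite.bddAbove (Set.finite_range _)) a
      _ ≤ ⨆ j, ⨆ a, (μ {ω | ξ j ω = a}).toReal :=
        le_ciSup (f := fun j => ⨆ a, (μ {ω | ξ j ω = a}).toReal)
          (Set.Finite.bddAbove (Set.finite_range _)) j
  have hsum : ∀ j, ∑ a, P j a = 1 := by
    intro j
    have h1 : ∑ a : Fin k, μ (ξ j ⁻¹' {a}) = μ (ξ j ⁻¹' (Finset.univ : Finset (Fin k))) :=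
      sum_measure_preimage_singleton _ (fun a _ => (hmeas j) (measurableSet_singleton a))
    simp only [Finset.coe_univ, Set.preimage_univ, measure_univ] at h1
    rw [show ∑ a, P j a = (∑ a : Fin k, μ (ξ j ⁻¹' {a})).toReal from ?_]
    · rw [h1]; simp
    · rw [ENNReal.toReal_sum (fun a _ => measure_ne_top μ _)]
      simp only [hP, hpre]
  -- the measurable sets
  have hSmeas : ∀ a : Fin k, MeasurableSet {ω | ∀ j, ξ j ω ≠ a} := by
    intro a
    have : {ω | ∀ j, ξ j ω ≠ a} = ⋂ j, ξ j ⁻¹' ({a}ᶜ) := by ext ω; simp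
    rw [this]
    exact MeasurableSet.iInter fun j => (hmeas j) (measurableSet_singleton a).compl
  -- integral = sum of measures
  have hint : ∫ ω, (Set.ncard {a : Fin k | ∀ j, ξ j ω ≠ a} : ℝ) ∂μ
      = ∑ a : Fin k, (μ {ω | ∀ j, ξ j ω ≠ a}).toReal := by
    have hfun : ∀ ω, (Set.ncard {a : Fin k | ∀ j, ξ j ω ≠ a} : ℝ)
        = ∑ a : Fin k, Set.indicator {ω | ∀ j, ξ j ω ≠ a} (1 : Ω → ℝ) ω := by
      intro ω
      rw [Set.ncard_eq_toFinset_card']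
      rw [Set.toFinset_setOf]
      rw [Finset.card_filter]
      push_cast
      apply Finset.sum_congr rfl
      intro a _
      by_cases h : ∀ j, ξ j ω ≠ a
      · simp [h, Set.indicator_of_mem, Set.mem_setOf_eq]
      · simp [h, Set.indicator_of_notMem, Set.mem_setOf_eq]
    rw [integral_congr_ae (Filter.EventuallyEq.of_eq (funext hfun))]
    rw [integral_finset_sum]
    · exact Finset.sum_congr rfl fun a _ => by
        rw [integral_indicator_one (hSmeas a)]; rfl
    · exact fun a _ => (integrable_const (1:ℝ)).indicator (hSmeas a)
  rw [hint]
  -- independence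
  have hmeasure : ∀ a : Fin k, (μ {ω | ∀ j, ξ j ω ≠ a}).toReal = ∏ j, (1 - P j a) := by
    intro a
    have hset : {ω | ∀ j, ξ j ω ≠ a} = ⋂ j, ξ j ⁻¹' ({a}ᶜ) := by ext ω; simp
    have hind := hindep.meas_iInter (s := fun j => ξ j ⁻¹' ({a}ᶜ))
      (fun j => ⟨{a}ᶜ, (measurableSet_singleton a).compl, rfl⟩)
    rw [hset, hind, ENNReal.toReal_prod]
    apply Finset.prod_congr rfl
    intro j _
    have : ξ j ⁻¹' ({a}ᶜ) = ({ω | ξ j ω = a})ᶜ := by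
      rw [Set.preimage_compl, hpre]
    show (μ (ξ j ⁻¹' ({a}ᶜ))).toReal = 1 - P j a
    rw [this, prob_compl_eq_one_sub (hpre j a ▸ (hmeas j) (measurableSet_singleton a)),
      ENNReal.toReal_sub_of_le prob_le_one ENNReal.one_ne_top, ENNReal.toReal_one]
  rw [Finset.sum_congr rfl fun a _ => hmeasure a]
  exact aux_sum_prod hk hd P p hnn hle hsum hp1
end

section
/- Let X be an exponential random variable with mean μ > 0, and let A be an event with P[A] = p, where 0 < p ≤ 1. Then E[X·1_A] ≤ p·(μ·log(e/p) + 1). -/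
open MeasureTheory

theorem stmt_6 {Ω : Type*} [MeasurableSpace Ω] (μ : Measure Ω) [IsProbabilityMeasure μ]
    (μ0 : ℝ) (hμ0 : 0 < μ0) (X : Ω → ℝ) (hXmeas : Measurable X)
    (hXnonneg : ∀ ω, 0 ≤ X ω)
    (htail : ∀ x : ℝ, 0 ≤ x → μ {ω | x < X ω} = ENNReal.ofReal (Real.exp (-x / μ0)))
    (A : Set Ω) (hA : MeasurableSet A) (p : ℝ) (hp0 : 0 < p) (hp1 : p ≤ 1)
    (hpA : μ A = ENNReal.ofReal p) :
    ∫ ω in A, X ω ∂μ ≤ p * (μ0 * Real.log (Real.exp 1 / p) + 1) := by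
  have hlogp : Real.log p ≤ 0 := Real.log_nonpos hp0.le hp1
  set T : ℝ := -(μ0 * Real.log p) with hTdef
  have hT0 : 0 ≤ T := by nlinarith
  have hexpT : Real.exp (-T / μ0) = p := by
    have : -T / μ0 = Real.log p := by field_simp [hTdef]; linarith
    rw [this, Real.exp_log hp0]
  -- convert to lintegral
  have heq1 : ∫ ω in A, X ω ∂μ
      = (∫⁻ ω in A, ENNReal.ofReal (X ω) ∂μ).toReal :=
    integral_eq_lintegral_of_nonneg_ae (Filter.Eventually.of_forall hXnonneg)
      hXmeas.aestronglyMeasurable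
  have heq2 : ∫⁻ ω, ENNReal.ofReal (X ω) ∂(μ.restrict A)
      = ∫⁻ t in Set.Ioi 0, (μ.restrict A) {ω | t < X ω} :=
    lintegral_eq_lintegral_meas_lt _ (Filter.Eventually.of_forall hXnonneg)
      hXmeas.aemeasurable
  set g : ℝ → ENNReal := fun t =>
    if t ≤ T then ENNReal.ofReal p else ENNReal.ofReal (Real.exp (-t / μ0)) with hg
  have hgmeas : Measurable g := by
    apply Measurable.ite measurableSet_Iic measurable_const
    exact (Real.measurable_exp.comp ((measurable_id.neg).div_const μ0)).ennreal_ofReal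
  have hbound : ∀ t ∈ Set.Ioi (0:ℝ), (μ.restrict A) {ω | t < X ω} ≤ g t := by
    intro t ht
    have hms : MeasurableSet {ω | t < X ω} := measurableSet_lt measurable_const hXmeas
    rw [Measure.restrict_apply hms]
    by_cases htT : t ≤ T
    · simp only [hg, if_pos htT]
      calc μ ({ω | t < X ω} ∩ A) ≤ μ A := measure_mono Set.inter_subset_right
        _ = ENNReal.ofReal p := hpA
    · simp only [hg, if_neg htT]
      calc μ ({ω | t < X ω} ∩ A) ≤ μ {ω | t < X ω} := measure_mono Set.inter_subset_left
        _ = ENNReal.ofReal (Real.exp (-t / μ0)) := htail t (le_of_lt ht)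
  have hle : ∫⁻ t in Set.Ioi 0, (μ.restrict A) {ω | t < X ω}
      ≤ ∫⁻ t in Set.Ioi (0:ℝ), g t := setLIntegral_mono hgmeas hbound
  -- compute the integral of g
  have hsplit : Set.Ioc (0:ℝ) T ∪ Set.Ioi T = Set.Ioi 0 := Set.Ioc_union_Ioi_eq_Ioi hT0
  have hint : IntegrableOn (fun t => Real.exp (-t / μ0)) (Set.Ioi T) := by
    have := exp_neg_integrableOn_Ioi T (inv_pos.mpr hμ0)
    simpa [div_eq_mul_inv, neg_mul, mul_comm] using this
  have hIoi : ∫⁻ t in Set.Ioi T, g t = ENNReal.ofReal (μ0 * p) := by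
    have hcongr : ∫⁻ t in Set.Ioi T, g t
        = ∫⁻ t in Set.Ioi T, ENNReal.ofReal (Real.exp (-t / μ0)) := by
      apply setLIntegral_congr_fun measurableSet_Ioi
      exact fun t ht => if_neg (not_le.mpr ht)
    rw [hcongr, ← ofReal_integral_eq_lintegral_ofReal hint
      (Filter.Eventually.of_forall fun t => (Real.exp_pos _).le)]
    congr 1
    have h1 : ∀ t : ℝ, Real.exp (-t / μ0) = Real.exp (-(t * μ0⁻¹)) := by
      intro t; rw [neg_div, div_eq_mul_inv]
    calc ∫ t in Set.Ioi T, Real.exp (-t / μ0)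
        = ∫ t in Set.Ioi T, Real.exp (-(t * μ0⁻¹)) := by simp_rw [h1]
      _ = (μ0⁻¹)⁻¹ • ∫ s in Set.Ioi (T * μ0⁻¹), Real.exp (-s) :=
          integral_comp_mul_right_Ioi (fun s => Real.exp (-s)) T (inv_pos.mpr hμ0)
      _ = μ0 * Real.exp (-(T * μ0⁻¹)) := by
          rw [integral_exp_neg_Ioi]; simp [smul_eq_mul]
      _ = μ0 * p := by rw [← hexpT]; congr 1; rw [neg_div, div_eq_mul_inv]
  have hIoc : ∫⁻ t in Set.Ioc (0:ℝ) T, g t = ENNReal.ofReal p * ENNReal.ofReal T := by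
    have hcongr : ∫⁻ t in Set.Ioc (0:ℝ) T, g t
        = ∫⁻ _ in Set.Ioc (0:ℝ) T, ENNReal.ofReal p := by
      apply setLIntegral_congr_fun measurableSet_Ioc
      exact fun t ht => if_pos ht.2
    rw [hcongr, setLIntegral_const, Real.volume_Ioc, sub_zero]
  have hgtot : ∫⁻ t in Set.Ioi (0:ℝ), g t = ENNReal.ofReal (p * T + μ0 * p) := by
    rw [← hsplit, lintegral_union measurableSet_Ioi (Set.Ioc_disjoint_Ioi le_rfl),
      hIoc, hIoi, ← ENNReal.ofReal_mul hp0.le, ← ENNReal.ofReal_add (by positivity)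
      (by positivity)]
  -- put things together
  have hLle : ∫⁻ ω in A, ENNReal.ofReal (X ω) ∂μ ≤ ENNReal.ofReal (p * T + μ0 * p) := by
    rw [heq2, ← hgtot]; exact hle
  have hfinal : ∫ ω in A, X ω ∂μ ≤ p * T + μ0 * p := by
    rw [heq1]
    calc (∫⁻ ω in A, ENNReal.ofReal (X ω) ∂μ).toReal
        ≤ (ENNReal.ofReal (p * T + μ0 * p)).toReal :=
          ENNReal.toReal_mono ENNReal.ofReal_ne_top hLle
      _ = p * T + μ0 * p := ENNReal.toReal_ofReal (by positivity)
  refine hfinal.trans ?_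
  have hloge : Real.log (Real.exp 1 / p) = 1 - Real.log p := by
    rw [Real.log_div (Real.exp_pos 1).ne' hp0.ne', Real.log_exp]
  rw [hloge, hTdef]
  nlinarith
end
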